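/- arXiv:2005.11268 — 4 statements merged into one kernel-verified Lean document; each statement's English description precedes it below -/
import Mathlib

section
/- Let f(X_1,...,X_n) = \sum_{1\le i\le j\le n} a_{ij}X_iX_j with a_{ij} \in \mathbb{Z} be a positive definite integral quadratic form (i.e., \sum a_{ij}x_ix_j > 0 for every nonzero x \in \mathbb{R}^n). If f is almost primitively universal, then for every prime p there exists a nonzero vector x \in \mathbb{Z}_p^n (with coefficients a_{ij} viewed in the ring \mathbb{Z}_p of p-adic integers) such that f(x) = 0. -/
/-!
Apply almost primitive universality to the integers `p ^ k * |N|`, which tend to `0` `p`-adically.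
A primitive integer vector has a coordinate that is a `p`-adic unit, so the representing vectors
lie in the compact set of `p`-adic vectors with a unit coordinate, which avoids `0`. The image of
that compact set under the continuous form is closed and accumulates at `0`, so it contains `0`.
-/

open Filter Topology

def triangularQuadForm {n : ℕ} {R : Type*} [CommRing R] (a : Fin n → Fin n → ℤ)
    (x : Fin n → R) : R :=
  ∑ i : Fin n, ∑ j ∈ Finset.Ici i, (a i j : R) * x i * x j

theorem triangularQuadForm_intCast {n : ℕ} {R : Type*} [CommRing R] (a : Fin n → Fin n → ℤ)
    (x : Fin n → ℤ) :
    triangularQuadForm a (fun i => (x i : R)) = ((triangularQuadForm a x : ℤ) : R) := by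
  simp [triangularQuadForm]

theorem continuous_triangularQuadForm {n : ℕ} {R : Type*} [CommRing R] [TopologicalSpace R]
    [IsTopologicalRing R] (a : Fin n → Fin n → ℤ) :
    Continuous (triangularQuadForm (R := R) a) := by
  unfold triangularQuadForm
  fun_prop

theorem IsCompact.mem_image_of_tendsto {X Y ι : Type*} [TopologicalSpace X] [TopologicalSpace Y]
    [T2Space Y] {l : Filter ι} [l.NeBot] {S : Set X} (hS : IsCompact S) {f : X → Y}
    (hf : Continuous f) {u : ι → X} (hu : ∀ k, u k ∈ S) {y : Y}
    (h : Tendsto (fun k => f (u k)) l (𝓝 y)) : y ∈ f '' S :=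
  (hS.image hf).isClosed.mem_of_tendsto h
    (Eventually.of_forall fun k => Set.mem_image_of_mem f (hu k))

namespace PadicInt

variable {p : ℕ} [Fact p.Prime]

theorem exists_norm_intCast_eq_one_of_gcd_eq_one {ι : Type*} {s : Finset ι} {x : ι → ℤ}
    (hx : s.gcd x = 1) : ∃ i ∈ s, ‖(x i : ℤ_[p])‖ = 1 := by
  by_contra! h
  have hdvd : (p : ℤ) ∣ s.gcd x := Finset.dvd_gcd fun i hi =>
    (norm_int_lt_one_iff_dvd _).1 ((norm_le_one _).lt_of_ne (h i hi))
  rw [hx, Int.natCast_dvd_ofNat, Nat.dvd_one] at hdvd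
  exact (Fact.out : p.Prime).one_lt.ne' hdvd

theorem isCompact_setOf_exists_norm_eq_one (ι : Type*) [Finite ι] :
    IsCompact {x : ι → ℤ_[p] | ∃ i, ‖x i‖ = 1} :=
  isCompact_univ.of_isClosed_subset
    (by simpa only [Set.ofPred_exists] using
      isClosed_iUnion_of_finite fun i => isClosed_eq (continuous_apply i).norm continuous_const)
    (Set.subset_univ _)

theorem tendsto_pow_mul_atTop_nhds_zero (c : ℤ_[p]) :
    Tendsto (fun k : ℕ => (p : ℤ_[p]) ^ k * c) atTop (𝓝 0) := by
  have hp : ‖(p : ℤ_[p])‖ < 1 := by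
    rw [norm_p]
    exact inv_lt_one_of_one_lt₀ (by exact_mod_cast (Fact.out : p.Prime).one_lt)
  simpa using (tendsto_pow_atTop_nhds_zero_of_norm_lt_one hp).mul_const c

end PadicInt

theorem stmt_0_general {n : ℕ} (a : Fin n → Fin n → ℤ)
    (hapu : ∃ N : ℤ, ∀ m : ℤ, N ≤ m → ∃ x : Fin n → ℤ,
      Finset.univ.gcd x = 1 ∧
      ∑ i : Fin n, ∑ j ∈ Finset.Ici i, a i j * x i * x j = m) :
    ∀ (p : ℕ) [Fact p.Prime], ∃ x : Fin n → ℤ_[p], x ≠ 0 ∧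
      ∑ i : Fin n, ∑ j ∈ Finset.Ici i, (a i j : ℤ_[p]) * x i * x j = 0 := by
  intro p hp
  obtain ⟨N, hN⟩ := hapu
  have hle : ∀ k : ℕ, N ≤ (p : ℤ) ^ k * |N| := fun k =>
    (le_abs_self N).trans <| le_mul_of_one_le_left (abs_nonneg N) <|
      one_le_pow₀ (by exact_mod_cast hp.out.one_le)
  choose x hprim hx using fun k => hN _ (hle k)
  have hvalues :
      ∀ k, triangularQuadForm a (fun i => (x k i : ℤ_[p])) = (p : ℤ_[p]) ^ k * |N| := by
    intro k
    rw [triangularQuadForm_intCast]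
    exact_mod_cast hx k
  obtain ⟨z, ⟨i, hi⟩, hz⟩ :=
    (PadicInt.isCompact_setOf_exists_norm_eq_one (Fin n)).mem_image_of_tendsto
      (continuous_triangularQuadForm a)
      (fun k => (PadicInt.exists_norm_intCast_eq_one_of_gcd_eq_one (p := p) (hprim k)).imp
        fun _ => And.right)
      (l := atTop) (by simpa only [hvalues] using PadicInt.tendsto_pow_mul_atTop_nhds_zero _)
  exact ⟨z, fun h0 => by simp [h0] at hi, hz⟩

/-- If a positive definite integral quadratic form is almost primitively
universal, then it nontrivially represents zero over `ℤ_[p]` for all primes `p`. -/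
theorem stmt_0 {n : ℕ} (a : Fin n → Fin n → ℤ)
    (hpos : ∀ x : Fin n → ℝ, x ≠ 0 →
      0 < ∑ i : Fin n, ∑ j ∈ Finset.Ici i, (a i j : ℝ) * x i * x j)
    (hapu : ∃ N : ℤ, ∀ m : ℤ, N ≤ m → ∃ x : Fin n → ℤ,
      Finset.univ.gcd x = 1 ∧
      ∑ i : Fin n, ∑ j ∈ Finset.Ici i, a i j * x i * x j = m) :
    ∀ (p : ℕ) [Fact p.Prime], ∃ x : Fin n → ℤ_[p], x ≠ 0 ∧
      ∑ i : Fin n, ∑ j ∈ Finset.Ici i, (a i j : ℤ_[p]) * x i * x j = 0 :=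
  stmt_0_general a hapu
end

section
/- Let p be a prime, M a quadratic form over \mathbb{Z}_p in m \ge 1 variables, and K a quadratic form over \mathbb{Z}_p in k \ge 1 variables all of whose values lie in 4p\mathbb{Z}_p. If the orthogonal sum Q(x,y) = M(x) + K(y) represents every unit of \mathbb{Z}_p, then M represents every unit of \mathbb{Z}_p. -/
/-!
Write the unit `u` as `M x + K y`. Since `p ∣ K y`, the value `M x` is a unit, so `u` is `M x`
times a `p`-adic integer congruent to `1` modulo `4p`. By Hensel's lemma such an integer is a
square `c ^ 2`, and then `M (c x) = c ^ 2 M x = u`.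
-/

theorem Finset.sum_sum_mul_mul_mul_left_sq {ι R : Type*} [Fintype ι] [CommSemiring R]
    (s : ι → Finset ι) (b : ι → ι → R) (c : R) (x : ι → R) :
    ∑ i, ∑ j ∈ s i, b i j * (c * x i) * (c * x j) =
      c ^ 2 * ∑ i, ∑ j ∈ s i, b i j * x i * x j := by
  simp only [Finset.mul_sum]
  exact Finset.sum_congr rfl fun i _ => Finset.sum_congr rfl fun j _ => by ring

namespace PadicInt

variable {p : ℕ} [Fact p.Prime]

open Polynomial in
theorem exists_sq_eq_of_norm_sub_one_lt {w : ℤ_[p]} (h : ‖w - 1‖ < ‖(2 : ℤ_[p])‖ ^ 2) :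
    ∃ c : ℤ_[p], c ^ 2 = w := by
  have hroot : ‖(X ^ 2 - C w : ℤ_[p][X]).eval 1‖
      < ‖(derivative (X ^ 2 - C w : ℤ_[p][X])).eval 1‖ ^ 2 := by
    simpa [← norm_neg (1 - w), one_add_one_eq_two] using h
  obtain ⟨c, hc, -⟩ := hensels_lemma hroot
  exact ⟨c, by simpa [sub_eq_zero] using hc⟩

theorem norm_lt_norm_two_sq_of_dvd {z : ℤ_[p]} (h : (4 * p : ℤ_[p]) ∣ z) :
    ‖z‖ < ‖(2 : ℤ_[p])‖ ^ 2 := by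
  obtain ⟨t, rfl⟩ := h
  have hp : (p : ℝ)⁻¹ < 1 :=
    inv_lt_one_of_one_lt₀ (by exact_mod_cast (Fact.out : p.Prime).one_lt)
  have h2 : (0 : ℝ) < ‖(2 : ℤ_[p])‖ ^ 2 := pow_pos (norm_pos_iff.mpr two_ne_zero) 2
  calc ‖4 * (p : ℤ_[p]) * t‖ = ‖(2 : ℤ_[p])‖ ^ 2 * (p : ℝ)⁻¹ * ‖t‖ := by
        rw [norm_mul, norm_mul, norm_p, show (4 : ℤ_[p]) = 2 ^ 2 by norm_num, norm_pow]
    _ ≤ ‖(2 : ℤ_[p])‖ ^ 2 * (p : ℝ)⁻¹ :=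
        mul_le_of_le_one_right (by positivity) (norm_le_one t)
    _ < ‖(2 : ℤ_[p])‖ ^ 2 := mul_lt_of_lt_one_right h2 hp

theorem exists_sq_mul_eq_add_of_dvd {v t : ℤ_[p]} (hv : IsUnit v) (ht : (4 * p : ℤ_[p]) ∣ t) :
    ∃ c : ℤ_[p], c ^ 2 * v = v + t := by
  obtain ⟨v, rfl⟩ := hv
  have hsub : (v + t) * ↑v⁻¹ - 1 = t * ↑v⁻¹ := by
    rw [add_mul, Units.mul_inv, add_sub_cancel_left]
  obtain ⟨c, hc⟩ := exists_sq_eq_of_norm_sub_one_lt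
    (hsub ▸ norm_lt_norm_two_sq_of_dvd (ht.mul_right _))
  exact ⟨c, by rw [hc, Units.inv_mul_cancel_right]⟩

end PadicInt

theorem stmt_5_general (p : ℕ) [Fact p.Prime]
    {m : ℕ} (b : Fin m → Fin m → ℤ_[p])
    (M : (Fin m → ℤ_[p]) → ℤ_[p])
    (hM : ∀ x, M x = ∑ i : Fin m, ∑ j ∈ Finset.Ici i, b i j * x i * x j)
    {k : ℕ}
    (K : (Fin k → ℤ_[p]) → ℤ_[p])
    (hnorm : ∀ y, (4 * p : ℤ_[p]) ∣ K y)
    (huniv : ∀ u : ℤ_[p], IsUnit u →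
      ∃ (x : Fin m → ℤ_[p]) (y : Fin k → ℤ_[p]), M x + K y = u) :
    ∀ u : ℤ_[p], IsUnit u → ∃ x : Fin m → ℤ_[p], M x = u := by
  intro u hu
  obtain ⟨x, y, rfl⟩ := huniv u hu
  have hKy : K y ∈ nonunits ℤ_[p] :=
    PadicInt.mem_nonunits.mpr ((PadicInt.norm_lt_one_iff_dvd _).mpr
      ((dvd_mul_left _ _).trans (hnorm y)))
  have hMx : IsUnit (M x) := by
    by_contra hMx
    exact IsLocalRing.nonunits_add hMx hKy hu
  obtain ⟨c, hc⟩ := PadicInt.exists_sq_mul_eq_add_of_dvd hMx (hnorm y)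
  refine ⟨fun i => c * x i, ?_⟩
  rw [hM, Finset.sum_sum_mul_mul_mul_left_sq, ← hM, hc]

/-- Lemma 2.1(ii): if `M ⊥ K` represents all units of `ℤ_[p]` and all values of `K`
lie in `4pℤ_[p]`, then `M` represents all units. -/
theorem stmt_5 (p : ℕ) [Fact p.Prime]
    {m : ℕ} (hm : 1 ≤ m) (b : Fin m → Fin m → ℤ_[p])
    (M : (Fin m → ℤ_[p]) → ℤ_[p])
    (hM : ∀ x, M x = ∑ i : Fin m, ∑ j ∈ Finset.Ici i, b i j * x i * x j)
    {k : ℕ} (hk : 1 ≤ k) (a : Fin k → Fin k → ℤ_[p])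
    (K : (Fin k → ℤ_[p]) → ℤ_[p])
    (hK : ∀ y, K y = ∑ i : Fin k, ∑ j ∈ Finset.Ici i, a i j * y i * y j)
    (hnorm : ∀ y, (4 * p : ℤ_[p]) ∣ K y)
    (huniv : ∀ u : ℤ_[p], IsUnit u →
      ∃ (x : Fin m → ℤ_[p]) (y : Fin k → ℤ_[p]), M x + K y = u) :
    ∀ u : ℤ_[p], IsUnit u → ∃ x : Fin m → ℤ_[p], M x = u :=
  stmt_5_general p b M hM K hnorm huniv
end

section
/- Let p be a prime, \varepsilon \in \mathbb{Z}_p^\times, and let K be a quadratic form over \mathbb{Z}_p in m \ge 1 variables which represents every unit of \mathbb{Z}_p. Then the form Q(t,v) = \varepsilon t^2 + K(v) on \mathbb{Z}_p \times \mathbb{Z}_p^m is primitively \mathbb{Z}_p-universal: every nonzero \alpha \in \mathbb{Z}_p equals Q(t,v) for some (t,v) with at least one coordinate a unit. -/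
/-!
If `α - ε` is a unit, `K` represents it and `t = 1` is a unit. Otherwise `α` itself is a unit,
because in a local ring the sum `(α - ε) + ε` of a nonunit and a unit is a unit; then `t = 0` and
any `v` with `K v = α` is primitive, since a quadratic form evaluated at a vector with all
coordinates in the maximal ideal lands in the maximal ideal.
-/

namespace IsLocalRing

variable {R : Type*} [CommRing R] [IsLocalRing R]

theorem isUnit_of_isUnit_of_not_isUnit_sub {α ε : R} (hε : IsUnit ε) (h : ¬IsUnit (α - ε)) :
    IsUnit α := by
  have hsum : IsUnit (α + (ε - α)) := by rwa [add_sub_cancel]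
  refine (isUnit_or_isUnit_of_isUnit_add hsum).resolve_right fun hεα => h ?_
  rw [← neg_sub]
  exact hεα.neg

theorem exists_isUnit_of_isUnit_quadratic {ι : Type*} [Fintype ι] [Preorder ι]
    [LocallyFiniteOrderTop ι] (a : ι → ι → R) (v : ι → R)
    (h : IsUnit (∑ i, ∑ j ∈ Finset.Ici i, a i j * v i * v j)) : ∃ i, IsUnit (v i) := by
  by_contra! hv
  have hmem : ∀ i, v i ∈ maximalIdeal R := fun i =>
    (mem_maximalIdeal _).2 (mem_nonunits_iff.2 (hv i))
  refine (mem_nonunits_iff.1 ((mem_maximalIdeal _).1 ?_)) h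
  exact Ideal.sum_mem _ fun i _ => Ideal.sum_mem _ fun j _ => Ideal.mul_mem_left _ _ (hmem j)

end IsLocalRing

theorem stmt_8_general (p : ℕ) [Fact p.Prime] (ε : ℤ_[p]) (hε : IsUnit ε)
    {m : ℕ} (a : Fin m → Fin m → ℤ_[p])
    (K : (Fin m → ℤ_[p]) → ℤ_[p])
    (hK : ∀ v, K v = ∑ i : Fin m, ∑ j ∈ Finset.Ici i, a i j * v i * v j)
    (hunits : ∀ u : ℤ_[p], IsUnit u → ∃ v : Fin m → ℤ_[p], K v = u) :
    ∀ α : ℤ_[p], α ≠ 0 → ∃ (t : ℤ_[p]) (v : Fin m → ℤ_[p]),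
      (IsUnit t ∨ ∃ i, IsUnit (v i)) ∧ ε * t ^ 2 + K v = α := by
  intro α _
  by_cases h : IsUnit (α - ε)
  · obtain ⟨v, hv⟩ := hunits _ h
    exact ⟨1, v, Or.inl isUnit_one, by rw [hv]; ring⟩
  · have hα : IsUnit α := IsLocalRing.isUnit_of_isUnit_of_not_isUnit_sub hε h
    obtain ⟨v, hv⟩ := hunits α hα
    have hprim : ∃ i, IsUnit (v i) :=
      IsLocalRing.exists_isUnit_of_isUnit_quadratic a v (hK v ▸ hv ▸ hα)
    exact ⟨0, v, Or.inr hprim, by rw [hv]; ring⟩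

/-- Lemma 3.7: if `K` represents all units of `ℤ_[p]`, then `⟨ε⟩ ⊥ K` is primitively
`ℤ_[p]`-universal for any unit `ε`. -/
theorem stmt_8 (p : ℕ) [Fact p.Prime] (ε : ℤ_[p]) (hε : IsUnit ε)
    {m : ℕ} (hm : 1 ≤ m) (a : Fin m → Fin m → ℤ_[p])
    (K : (Fin m → ℤ_[p]) → ℤ_[p])
    (hK : ∀ v, K v = ∑ i : Fin m, ∑ j ∈ Finset.Ici i, a i j * v i * v j)
    (hunits : ∀ u : ℤ_[p], IsUnit u → ∃ v : Fin m → ℤ_[p], K v = u) :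
    ∀ α : ℤ_[p], α ≠ 0 → ∃ (t : ℤ_[p]) (v : Fin m → ℤ_[p]),
      (IsUnit t ∨ ∃ i, IsUnit (v i)) ∧ ε * t ^ 2 + K v = α :=
  stmt_8_general p ε hε a K hK hunits
end

section
/- Let \varepsilon_1, \varepsilon_2, \varepsilon_3 \in \mathbb{Z}_2^\times and let Q(x,y,z) = \varepsilon_1 x^2 + \varepsilon_2 y^2 + \varepsilon_3 z^2 over \mathbb{Z}_2. Then the following are equivalent: (i) Q is \mathbb{Z}_2-universal; (ii) Q is primitively \mathbb{Z}_2-universal; (iii) there exist i, j \in {1,2,3} such that \varepsilon_i \equiv -\varepsilon_j \pmod{4\mathbb{Z}_2}. -/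
/-!
Everything is decided modulo `8`. By Hensel's lemma a `2`-adic number congruent to a unit `a`
modulo `8` has the form `a v ^ 2` with `v` a unit, so a variable with unit coefficient can be solved
for once the other two are fixed modulo `8`. If `εᵢ + εⱼ ≡ 0 (mod 4)` for some `i ≠ j`, a finite
check modulo `8` shows that every residue is reached with `xᵢ` or `xⱼ` the solved variable, which
gives primitive representations of every `α`. Otherwise the three units are congruent modulo `4`,
and `ε₁ + ε₂ + ε₃ + 4` is not represented even modulo `8`.
-/

open IsLocalRing Polynomial PadicInt

/- Writing `v = 1 + 2t`, the equation `v ^ 2 = 1 + 8d` becomes `t ^ 2 + t = 2d`, whose root `0`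
modulo the maximal ideal is simple. -/
theorem exists_isUnit_sq_eq_one_add_eight_mul {R : Type*} [CommRing R] [IsLocalRing R]
    [HenselianRing R (maximalIdeal R)] (h2 : (2 : R) ∈ maximalIdeal R) (d : R) :
    ∃ v : R, IsUnit v ∧ v ^ 2 = 1 + 8 * d := by
  have hmonic : (X ^ 2 + X - C (2 * d) : R[X]).Monic := by monicity!
  obtain ⟨t, ht, htm⟩ := HenselianRing.is_henselian (X ^ 2 + X - C (2 * d)) hmonic 0
    (by
      simpa only [eval_sub, eval_add, eval_pow, eval_X, eval_C, zero_pow two_ne_zero, zero_add,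
        zero_sub, neg_mem_iff] using (maximalIdeal R).mul_mem_right d h2) (by simp)
  refine ⟨1 + 2 * t, ?_, ?_⟩
  · have h2t : -(2 * t) ∈ nonunits R :=
      (mem_maximalIdeal _).1 (neg_mem ((maximalIdeal R).mul_mem_left 2 (by simpa using htm)))
    simpa using isUnit_one_sub_self_of_mem_nonunits _ h2t
  · simp only [IsRoot, eval_sub, eval_add, eval_pow, eval_X, eval_C] at ht
    linear_combination 4 * ht

theorem ZMod.two_mul_add_self_ne_zero_of_isUnit : ∀ a : ZMod 8, IsUnit a → 2 * (a + a) ≠ 0 := by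
  decide

set_option synthInstance.maxSize 2048 in
theorem ZMod.exists_eq_of_two_mul_add_eq_zero : ∀ a b c r : ZMod 8,
    IsUnit a → IsUnit b → IsUnit c → 2 * (a + b) = 0 →
    ∃ y z : ZMod 8, r = a + b * y ^ 2 + c * z ^ 2 ∨ r = a * y ^ 2 + b + c * z ^ 2 := by
  decide

set_option synthInstance.maxSize 2048 in
theorem ZMod.mul_sq_add_mul_sq_add_mul_sq_ne : ∀ a b c : ZMod 8,
    IsUnit a → IsUnit b → IsUnit c → 2 * (a + b) ≠ 0 → 2 * (a + c) ≠ 0 → 2 * (b + c) ≠ 0 →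
    ∀ x y z : ZMod 8, a * x ^ 2 + b * y ^ 2 + c * z ^ 2 ≠ a + b + c + 4 := by
  decide

theorem Fin.exists_perm_apply_zero_apply_one {i j : Fin 3} (h : i ≠ j) :
    ∃ σ : Equiv.Perm (Fin 3), σ 0 = i ∧ σ 1 = j := by
  revert i j; decide

namespace PadicInt

theorem toZModPow_eq_iff_dvd_sub {p : ℕ} [Fact p.Prime] {n : ℕ} {a b : ℤ_[p]} :
    toZModPow n a = toZModPow n b ↔ (p : ℤ_[p]) ^ n ∣ a - b := by
  rw [← sub_eq_zero, ← map_sub, ← RingHom.mem_ker, ker_toZModPow, Ideal.mem_span_singleton]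

local notation "φ" => (toZModPow 3 : ℤ_[2] →+* ZMod (2 ^ 3))

theorem toZModPow_three_eq_iff {a b : ℤ_[2]} : φ a = φ b ↔ 8 ∣ a - b := by
  rw [toZModPow_eq_iff_dvd_sub]; norm_num

theorem four_dvd_iff {a : ℤ_[2]} : 4 ∣ a ↔ 2 * φ a = 0 := by
  rw [← map_ofNat φ 2, ← map_mul, ← map_zero φ, toZModPow_three_eq_iff, sub_zero,
    show (8 : ℤ_[2]) = 2 * 4 by norm_num, mul_dvd_mul_iff_left two_ne_zero]

theorem exists_isUnit_mul_sq_eq {a γ : ℤ_[2]} (ha : IsUnit a) (h : φ γ = φ a) :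
    ∃ v : ℤ_[2], IsUnit v ∧ a * v ^ 2 = γ := by
  obtain ⟨d, hd⟩ := toZModPow_three_eq_iff.1 h
  obtain ⟨v, hv, hv2⟩ := exists_isUnit_sq_eq_one_add_eight_mul
    ((mem_maximalIdeal _).2 (by simpa using p_nonunit (p := 2))) (d * ha.unit⁻¹)
  refine ⟨v, hv, ?_⟩
  rw [hv2]
  linear_combination (-1 : ℤ_[2]) * hd + 8 * d * ha.mul_val_inv

theorem toZModPow_surjective {p : ℕ} [Fact p.Prime] (n : ℕ) :
    Function.Surjective (toZModPow n : ℤ_[p] →+* ZMod (p ^ n)) :=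
  fun y => ⟨y.val, by simp⟩

theorem exists_isUnit_or_isUnit_of_four_dvd_add {a b c : ℤ_[2]} (ha : IsUnit a)
    (hb : IsUnit b) (hc : IsUnit c) (hab : 4 ∣ a + b) (α : ℤ_[2]) :
    ∃ x y z : ℤ_[2], (IsUnit x ∨ IsUnit y) ∧ a * x ^ 2 + b * y ^ 2 + c * z ^ 2 = α := by
  rw [four_dvd_iff, map_add] at hab
  obtain ⟨y, z, hyz⟩ := ZMod.exists_eq_of_two_mul_add_eq_zero _ _ _ (φ α)
    (ha.map φ) (hb.map φ) (hc.map φ) hab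
  obtain ⟨y, rfl⟩ := toZModPow_surjective (p := 2) 3 y
  obtain ⟨z, rfl⟩ := toZModPow_surjective (p := 2) 3 z
  rcases hyz with hyz | hyz
  · obtain ⟨x, hx, hx2⟩ := exists_isUnit_mul_sq_eq (γ := α - b * y ^ 2 - c * z ^ 2) ha
      (by simp only [map_sub, map_mul, map_pow, hyz]; ring)
    exact ⟨x, y, z, .inl hx, by linear_combination hx2⟩
  · obtain ⟨x, hx, hx2⟩ := exists_isUnit_mul_sq_eq (γ := α - a * y ^ 2 - c * z ^ 2) hb
      (by simp only [map_sub, map_mul, map_pow, hyz]; ring)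
    exact ⟨y, x, z, .inr hx, by linear_combination hx2⟩

theorem exists_primitive_sum_mul_sq_eq {ε : Fin 3 → ℤ_[2]} (hε : ∀ i, IsUnit (ε i))
    {i j : Fin 3} (hij : 4 ∣ ε i + ε j) (α : ℤ_[2]) :
    ∃ x : Fin 3 → ℤ_[2], (∃ k, IsUnit (x k)) ∧ ∑ k, ε k * x k ^ 2 = α := by
  have hne : i ≠ j := by
    rintro rfl
    rw [four_dvd_iff, map_add] at hij
    exact ZMod.two_mul_add_self_ne_zero_of_isUnit _ ((hε i).map φ) hij
  obtain ⟨σ, rfl, rfl⟩ := Fin.exists_perm_apply_zero_apply_one hne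
  obtain ⟨x, y, z, hxy, hxyz⟩ :=
    exists_isUnit_or_isUnit_of_four_dvd_add (hε (σ 0)) (hε (σ 1)) (hε (σ 2)) hij α
  refine ⟨![x, y, z] ∘ σ.symm, ?_, ?_⟩
  · rcases hxy with hx | hy
    exacts [⟨σ 0, by simpa⟩, ⟨σ 1, by simpa⟩]
  · rw [← Equiv.sum_comp σ]
    simpa [Fin.sum_univ_three] using hxyz

theorem sum_mul_sq_ne {ε : Fin 3 → ℤ_[2]} (hε : ∀ i, IsUnit (ε i))
    (h : ∀ i j, ¬4 ∣ ε i + ε j) (x : Fin 3 → ℤ_[2]) :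
    ∑ i, ε i * x i ^ 2 ≠ ε 0 + ε 1 + ε 2 + 4 := by
  have h' (i j : Fin 3) : 2 * (φ (ε i) + φ (ε j)) ≠ 0 := fun h0 =>
    h i j (four_dvd_iff.2 (by rwa [map_add]))
  intro hx
  have hφx := congrArg φ hx
  simp only [Fin.sum_univ_three, map_add, map_mul, map_pow, map_ofNat] at hφx
  exact ZMod.mul_sq_add_mul_sq_add_mul_sq_ne _ _ _ ((hε 0).map φ) ((hε 1).map φ) ((hε 2).map φ)
    (h' 0 1) (h' 0 2) (h' 1 2) _ _ _ hφx

end PadicInt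

/-- Proposition 5.4: for units `ε₁, ε₂, ε₃` of `ℤ_[2]` and
`Q = ε₁x² + ε₂y² + ε₃z²`, the following are equivalent: `Q` is `ℤ_[2]`-universal;
`Q` is primitively `ℤ_[2]`-universal; `εᵢ ≡ -εⱼ (mod 4ℤ_[2])` for some `i, j`. -/
theorem stmt_16 (ε : Fin 3 → ℤ_[2]) (hε : ∀ i, IsUnit (ε i)) :
    ((∀ α : ℤ_[2], ∃ x : Fin 3 → ℤ_[2], ∑ i : Fin 3, ε i * x i ^ 2 = α) ↔
      (∀ α : ℤ_[2], α ≠ 0 → ∃ x : Fin 3 → ℤ_[2],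
        (∃ i, IsUnit (x i)) ∧ ∑ i : Fin 3, ε i * x i ^ 2 = α)) ∧
    ((∀ α : ℤ_[2], ∃ x : Fin 3 → ℤ_[2], ∑ i : Fin 3, ε i * x i ^ 2 = α) ↔
      ∃ i j : Fin 3, ∃ δ : ℤ_[2], ε i = -ε j + 4 * δ) := by
  have hcond : (∃ i j : Fin 3, ∃ δ : ℤ_[2], ε i = -ε j + 4 * δ) ↔ ∃ i j, 4 ∣ ε i + ε j :=
    exists₂_congr fun i j => exists_congr fun δ => by
      constructor <;> intro h <;> linear_combination h
  have key : (∀ α : ℤ_[2], ∃ x : Fin 3 → ℤ_[2], ∑ i : Fin 3, ε i * x i ^ 2 = α) ↔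
      ∃ i j, 4 ∣ ε i + ε j := by
    refine ⟨fun hU => ?_, fun ⟨i, j, hij⟩ α => ?_⟩
    · by_contra! h
      obtain ⟨x, hx⟩ := hU (ε 0 + ε 1 + ε 2 + 4)
      exact sum_mul_sq_ne hε h x hx
    · obtain ⟨x, -, hx⟩ := exists_primitive_sum_mul_sq_eq hε hij α
      exact ⟨x, hx⟩
  refine ⟨⟨fun hU α _ => ?_, fun hP α => ?_⟩, key.trans hcond.symm⟩
  · obtain ⟨i, j, hij⟩ := key.1 hU
    exact exists_primitive_sum_mul_sq_eq hε hij α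
  · rcases eq_or_ne α 0 with rfl | hα
    · exact ⟨0, by simp⟩
    · obtain ⟨x, -, hx⟩ := hP α hα
      exact ⟨x, hx⟩
end
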